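/- Let m ≥ 1, let u ∈ M_m(ℂ), and let z₀ ∈ M_m(ℝ) be a diagonal matrix with strictly positive diagonal entries. There exists a polynomial P ∈ ℂ[X] (depending on u and z₀) of degree at most m such that for every s ∈ ℂ, Δ|_{z=z₀}( e^{tr(uz)} · det(z)^s ) = e^{tr(u z₀)} · det(z₀)^s · P(s), where det(z)^s := exp(s · Log(det z)) with Log the principal complex logarithm (well defined and holomorphic on a neighborhood of z₀, since det z₀ > 0). -/

import Mathlib

/-! Near `z₀` write `e^{tr(uz)} det(z)^s = exp (a z + s * b z)` with `a z = tr(uz)` and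
`b z = Log det z` holomorphic. A directional derivative of `exp (a + s b) * P(s, z)`, `P` a
polynomial in `s` with holomorphic coefficients, is `exp (a + s b) * (∂P + (∂a + s ∂b) P)`, so it
raises the degree in `s` by at most one. Each of the `m!` terms of `Δ` is an `m`-fold composition
of first-order derivatives, hence equals `exp (a + s b)` times a polynomial of degree `≤ m`. -/

open Matrix

/-- Partial derivative `∂/∂z_{j,k}` acting on functions of `m × m` complex matrices
(viewed as functions of the `m²` entries). -/
noncomputable def matPartial {m : ℕ} (j k : Fin m)
    (f : (Fin m → Fin m → ℂ) → ℂ) : (Fin m → Fin m → ℂ) → ℂ :=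
  fun z => fderiv ℂ f z (Matrix.of.symm (Matrix.single j k (1 : ℂ)))

/-- Shimura's differential operator `Δ = det(∂/∂z_{j,k})
  = ∑_{σ ∈ S_m} sgn(σ) ∂^m/(∂z_{1,σ(1)} ⋯ ∂z_{m,σ(m)})`,
applied to `f` at the point `z₀`. -/
noncomputable def matDelta {m : ℕ} (f : Matrix (Fin m) (Fin m) ℂ → ℂ)
    (z₀ : Matrix (Fin m) (Fin m) ℂ) : ℂ :=
  ∑ σ : Equiv.Perm (Fin m),
    ((Equiv.Perm.sign σ : ℤ) : ℂ) *
      (((List.ofFn fun j : Fin m => matPartial j (σ j)).foldr (· ∘ ·) id)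
        (fun z => f (Matrix.of z))) (Matrix.of.symm z₀)

open Polynomial Complex
open scoped ContDiff

section ExpMulPoly

variable {E : Type*} [NormedAddCommGroup E] [NormedSpace ℂ E]

def IsExpMulPolyOn (U : Set E) (a b : E → ℂ) (n : ℕ) (h : ℂ → E → ℂ) : Prop :=
  ∃ p : E → ℂ[X], (∀ z, (p z).degree ≤ n) ∧ (∀ k, ContDiffOn ℂ ω (fun z => (p z).coeff k) U) ∧
    ∀ s, ∀ z ∈ U, h s z = exp (a z + s * b z) * (p z).eval s

variable {U : Set E} {a b : E → ℂ}

theorem isExpMulPolyOn_exp_mul_exp :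
    IsExpMulPolyOn U a b 0 fun s z => exp (a z) * exp (s * b z) :=
  ⟨fun _ => 1, fun _ => degree_one_le, fun k => by simpa only [coeff_one] using contDiffOn_const,
    fun s z _ => by rw [exp_add, eval_one, mul_one]⟩

theorem hasFDerivAt_eval_of_coeff {p : E → ℂ[X]} {n : ℕ} (hdeg : ∀ z, (p z).degree ≤ n)
    {p' : ℕ → E →L[ℂ] ℂ} {z : E} (hp : ∀ k, HasFDerivAt (fun w => (p w).coeff k) (p' k) z)
    (s : ℂ) :
    HasFDerivAt (fun w => (p w).eval s) (∑ k ∈ Finset.range (n + 1), s ^ k • p' k) z := by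
  have hsum : (fun w => (p w).eval s) =
      fun w => ∑ k ∈ Finset.range (n + 1), (p w).coeff k * s ^ k :=
    funext fun w => eval_eq_sum_range' (Nat.lt_succ_of_le (natDegree_le_of_degree_le (hdeg w))) s
  rw [hsum]
  exact HasFDerivAt.fun_sum fun k _ => (hp k).mul_const (s ^ k)

theorem IsExpMulPolyOn.fderiv_apply (hU : IsOpen U) (ha : ContDiffOn ℂ ω a U)
    (hb : ContDiffOn ℂ ω b U) {n : ℕ} {h : ℂ → E → ℂ} (hh : IsExpMulPolyOn U a b n h) (v : E) :
    IsExpMulPolyOn U a b (n + 1) fun s z => fderiv ℂ (h s) z v := by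
  obtain ⟨p, hdeg, hcoeff, hval⟩ := hh
  refine ⟨fun z => ∑ k ∈ Finset.range (n + 1),
        C (fderiv ℂ (fun w => (p w).coeff k) z v) * X ^ k
      + (C (fderiv ℂ b z v) * X + C (fderiv ℂ a z v)) * p z, fun z => ?_, fun k => ?_,
      fun s z hz => ?_⟩
  · refine degree_add_le_of_degree_le
      ((degree_sum_le _ _).trans (Finset.sup_le fun k hk => ?_)) ?_
    · refine (degree_C_mul_X_pow_le _ _).trans ?_
      exact_mod_cast (Finset.mem_range_succ_iff.1 hk).trans n.le_succ
    · calc _ ≤ 1 + (n : WithBot ℕ) :=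
            (degree_mul_le _ _).trans (add_le_add degree_linear_le (hdeg z))
        _ = ↑(n + 1) := by push_cast; ring
  · have hdir : ∀ f : E → ℂ, ContDiffOn ℂ ω f U → ContDiffOn ℂ ω (fun z => fderiv ℂ f z v) U :=
      fun f hf => (hf.fderiv_of_isOpen hU le_top).clm_apply contDiffOn_const
    rcases k with _ | k
    · simpa [add_mul, mul_assoc] using (hdir _ (hcoeff 0)).add ((hdir a ha).mul (hcoeff 0))
    · have hbk := ((hdir b hb).mul (hcoeff k)).add ((hdir a ha).mul (hcoeff (k + 1)))
      obtain hk | hk := lt_or_ge k n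
      · simpa [add_mul, mul_assoc, coeff_X_mul, hk] using (hdir _ (hcoeff (k + 1))).add hbk
      · simpa [add_mul, mul_assoc, coeff_X_mul, hk.not_gt] using hbk
  · have hUz : U ∈ nhds z := hU.mem_nhds hz
    have hdiff : ∀ f : E → ℂ, ContDiffOn ℂ ω f U → HasFDerivAt f (fderiv ℂ f z) z :=
      fun f hf => ((hf.contDiffAt hUz).differentiableAt (by simp)).hasFDerivAt
    have hexp : HasFDerivAt (fun w => exp (a w + s * b w))
        (exp (a z + s * b z) • (fderiv ℂ a z + s • fderiv ℂ b z)) z :=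
      ((hdiff a ha).add ((hdiff b hb).const_mul s)).cexp
    have hpol := hasFDerivAt_eval_of_coeff hdeg (fun k => hdiff _ (hcoeff k)) s
    have hfd : fderiv ℂ (h s) z = fderiv ℂ (fun w => exp (a w + s * b w) * (p w).eval s) z :=
      Filter.EventuallyEq.fderiv_eq (Filter.eventually_of_mem hUz (hval s))
    dsimp only
    rw [hfd, (hexp.fun_mul hpol).fderiv]
    simp only [_root_.add_apply, _root_.smul_apply, _root_.sum_apply, smul_eq_mul, eval_add,
      eval_finsetSum, eval_mul, eval_C, eval_pow, eval_X, mul_comm (s ^ _)]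
    ring

theorem IsExpMulPolyOn.foldr_fderiv (hU : IsOpen U) (ha : ContDiffOn ℂ ω a U)
    (hb : ContDiffOn ℂ ω b U) {n : ℕ} {h : ℂ → E → ℂ} (hh : IsExpMulPolyOn U a b n h)
    (vs : List E) :
    IsExpMulPolyOn U a b (n + vs.length)
      fun s => (vs.map fun v f z => fderiv ℂ f z v).foldr (· ∘ ·) id (h s) := by
  induction vs with
  | nil => simpa using hh
  | cons v vs ih => simpa [← add_assoc] using ih.fderiv_apply hU ha hb v

end ExpMulPoly

section MatrixEntries

variable {m : ℕ}

theorem contDiff_det_of {n : WithTop ℕ∞} :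
    ContDiff ℂ n fun z : Fin m → Fin m → ℂ => (of z).det := by
  simp only [det_apply, of_apply]
  fun_prop

theorem contDiff_trace_mul_of (u : Matrix (Fin m) (Fin m) ℂ) {n : WithTop ℕ∞} :
    ContDiff ℂ n fun z : Fin m → Fin m → ℂ => (u * of z).trace := by
  simp only [trace, diag, mul_apply, of_apply]
  fun_prop

theorem isOpen_setOf_det_of_mem_slitPlane :
    IsOpen {z : Fin m → Fin m → ℂ | (of z).det ∈ slitPlane} :=
  isOpen_slitPlane.preimage (contDiff_det_of (n := 0)).continuous

theorem contDiffOn_log_det_of {n : WithTop ℕ∞} :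
    ContDiffOn ℂ n (fun z : Fin m → Fin m → ℂ => log (of z).det)
      {z | (of z).det ∈ slitPlane} :=
  fun z hz => ((contDiffAt_log hz).comp z contDiff_det_of.contDiffAt).contDiffWithinAt

end MatrixEntries

theorem stmt2_general {m : ℕ} (u : Matrix (Fin m) (Fin m) ℂ)
    (d : Fin m → ℝ) (hd : ∀ i, 0 < d i) :
    ∃ P : Polynomial ℂ, P.degree ≤ m ∧ ∀ s : ℂ,
      matDelta
          (fun z => Complex.exp (Matrix.trace (u * z)) * Complex.exp (s * Complex.log z.det))
          (Matrix.diagonal fun i => (d i : ℂ)) =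
        Complex.exp (Matrix.trace (u * Matrix.diagonal fun i => (d i : ℂ))) *
          Complex.exp (s * Complex.log (Matrix.diagonal fun i => (d i : ℂ)).det) *
          P.eval s := by
  set z₀ : Fin m → Fin m → ℂ := of.symm (diagonal fun i => (d i : ℂ))
  have hz₀ : (of z₀).det ∈ slitPlane := by
    rw [Equiv.apply_symm_apply, det_diagonal, ← ofReal_prod]
    exact ofReal_mem_slitPlane.2 (Finset.prod_pos fun i _ => hd i)
  have hσ (σ : Equiv.Perm (Fin m)) :
      IsExpMulPolyOn {z | (of z).det ∈ slitPlane} (fun z => (u * of z).trace)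
        (fun z => log (of z).det) m fun s =>
          (List.ofFn fun j => matPartial j (σ j)).foldr (· ∘ ·) id
            fun z => exp (u * of z).trace * exp (s * log (of z).det) := by
    have := isExpMulPolyOn_exp_mul_exp.foldr_fderiv isOpen_setOf_det_of_mem_slitPlane
      (contDiff_trace_mul_of u).contDiffOn contDiffOn_log_det_of
      (List.ofFn fun j => of.symm (single j (σ j) 1))
    rw [List.map_ofFn, List.length_ofFn, zero_add] at this
    exact this
  choose p hdeg _ hval using hσ
  beta_reduce at hval
  refine ⟨∑ σ, (Equiv.Perm.sign σ : ℂ) • p σ z₀, ?_, fun s => ?_⟩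
  · exact mem_degreeLE.1 (Submodule.sum_mem _ fun σ _ =>
      Submodule.smul_mem _ _ (mem_degreeLE.2 (hdeg σ z₀)))
  · rw [matDelta, eval_finsetSum, Finset.mul_sum]
    refine Finset.sum_congr rfl fun σ _ => ?_
    rw [hval σ s z₀ hz₀]
    simp only [z₀, Equiv.apply_symm_apply, eval_smul, smul_eq_mul, exp_add]
    ring

/-- For `u ∈ M_m(ℂ)` and `z₀ = diag(d₁, …, d_m)` real diagonal with
positive entries, there is a polynomial `P ∈ ℂ[X]` of degree at most `m` such that for
every `s ∈ ℂ`, `Δ|_{z=z₀}(e^{tr(uz)} det(z)^s) = e^{tr(u z₀)} det(z₀)^s · P(s)`, where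
`det(z)^s := exp(s · Log(det z))` with `Log` the principal complex logarithm. -/
theorem stmt2 {m : ℕ} (hm : 1 ≤ m) (u : Matrix (Fin m) (Fin m) ℂ)
    (d : Fin m → ℝ) (hd : ∀ i, 0 < d i) :
    ∃ P : Polynomial ℂ, P.degree ≤ m ∧ ∀ s : ℂ,
      matDelta
          (fun z => Complex.exp (Matrix.trace (u * z)) * Complex.exp (s * Complex.log z.det))
          (Matrix.diagonal fun i => (d i : ℂ)) =
        Complex.exp (Matrix.trace (u * Matrix.diagonal fun i => (d i : ℂ))) *
          Complex.exp (s * Complex.log (Matrix.diagonal fun i => (d i : ℂ)).det) *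
          P.eval s :=
  stmt2_general u d hd
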